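/- arXiv:2103.02934 — 2 statements merged into one kernel-verified Lean document; each statement's English description precedes it below -/
import Mathlib

section
/- The hypersurface X in (ℙ¹)⁴ defined by u₁u₂u₃u₄ - v₁v₂v₃v₄ = 0 (where (uᵢ:vᵢ) are homogeneous coordinates on the i-th factor) has exactly 6 singular points, namely the points x_{p,q} indexed by 2-element subsets {p,q} ⊆ {1,2,3,4}, where uᵢ = 0 for i ∈ {p,q} and vᵢ = 0 for i ∉ {p,q}; moreover each singular point is an ordinary double point. -/
open MvPolynomial

/-- The multidegree `(1,1,1,1)` form `u₁u₂u₃u₄ - v₁v₂v₃v₄` on `(ℙ¹)⁴`, written in the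
8 homogeneous coordinates indexed by `Fin 4 ⊕ Fin 4` (`inl i ↦ uᵢ`, `inr i ↦ vᵢ`). -/
noncomputable def quadForm (k : Type*) [CommRing k] : MvPolynomial (Fin 4 ⊕ Fin 4) k :=
  (∏ i : Fin 4, X (Sum.inl i)) - ∏ i : Fin 4, X (Sum.inr i)

/-- `w` is a valid representative of a point of `(ℙ¹)⁴`: on each factor the two
homogeneous coordinates do not both vanish. -/
def IsRep {k : Type*} [CommRing k] (w : Fin 4 ⊕ Fin 4 → k) : Prop :=
  ∀ i : Fin 4, ¬ (w (Sum.inl i) = 0 ∧ w (Sum.inr i) = 0)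

/-!
Each partial derivative of `u₁u₂u₃u₄` is the product of the other three coordinates, so the
gradient of the form vanishes exactly when at least two `uᵢ` and at least two `vᵢ` vanish (and
then the form vanishes too). Since `uᵢ` and `vᵢ` never vanish together and there are only four
indices, the `u`'s vanish on a pair `{p, q}` and the `v`'s on the complementary pair.

The Hessian is block diagonal in the `u` and `v` variables. At such a point the only nonzero
entries of the `u`-block are `∂²/∂u_p∂u_q = ∏_{j ∉ {p, q}} uⱼ` and its transpose, so it is a
diagonal matrix of rank 2 times the permutation matrix of the transposition `(p q)`; the same
holds for the `v`-block, so the Hessian has rank 4.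
-/

open Finset Matrix

theorem LinearMap.finrank_range_prodMap {K V₁ V₂ W₁ W₂ : Type*} [Field K]
    [AddCommGroup V₁] [Module K V₁] [AddCommGroup V₂] [Module K V₂]
    [AddCommGroup W₁] [Module K W₁] [AddCommGroup W₂] [Module K W₂]
    [FiniteDimensional K W₁] [FiniteDimensional K W₂]
    (f : V₁ →ₗ[K] W₁) (g : V₂ →ₗ[K] W₂) :
    Module.finrank K (f.prodMap g).range =
      Module.finrank K f.range + Module.finrank K g.range := by
  have hfactor : f.prodMap g =
      (f.range.subtype.prodMap g.range.subtype) ∘ₗ (f.rangeRestrict.prodMap g.rangeRestrict) := by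
    ext <;> simp
  have hsurj : (f.rangeRestrict.prodMap g.rangeRestrict).range = ⊤ := by
    simp [LinearMap.range_prodMap, LinearMap.range_rangeRestrict]
  rw [hfactor, LinearMap.range_comp_of_range_eq_top _ hsurj,
    LinearMap.finrank_range_of_inj, Module.finrank_prod]
  exact Function.Injective.prodMap f.range.injective_subtype g.range.injective_subtype

theorem Matrix.rank_neg {m n R : Type*} [Fintype n] [CommRing R] (A : Matrix m n R) :
    (-A).rank = A.rank := by
  have hneg : (-A).mulVecLin = -A.mulVecLin := by ext; simp
  rw [Matrix.rank, hneg, LinearMap.range_neg, Matrix.rank]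

theorem Matrix.rank_fromBlocks_zero_zero {K m₁ m₂ n₁ n₂ : Type*} [Field K]
    [Fintype m₁] [Fintype m₂] [Fintype n₁] [Fintype n₂]
    (A : Matrix m₁ n₁ K) (D : Matrix m₂ n₂ K) :
    (fromBlocks A 0 0 D).rank = A.rank + D.rank := by
  have hconj : (fromBlocks A 0 0 D).mulVecLin =
      (LinearEquiv.sumArrowLequivProdArrow m₁ m₂ K K).symm.toLinearMap ∘ₗ
        (A.mulVecLin.prodMap D.mulVecLin) ∘ₗ
        (LinearEquiv.sumArrowLequivProdArrow n₁ n₂ K K).toLinearMap := by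
    ext v i
    rcases i with i | i <;> simp [fromBlocks_mulVec] <;> rfl
  rw [Matrix.rank, hconj, LinearMap.range_comp, LinearMap.range_comp_of_range_eq_top _
      (LinearEquiv.range _), LinearEquiv.finrank_map_eq, LinearMap.finrank_range_prodMap]
  rfl

theorem Matrix.rank_diagonal_mul_permMatrix {n K : Type*} [Fintype n] [DecidableEq n] [Field K]
    [DecidableEq K] (d : n → K) (σ : Equiv.Perm n) :
    (diagonal d * σ.permMatrix K).rank = #{i | d i ≠ 0} := by
  have hσ : IsUnit (σ.permMatrix K).det := by
    rw [det_permutation]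
    exact (σ.sign.isUnit.map (Int.castRingHom K))
  rw [rank_mul_eq_left_of_isUnit_det _ _ hσ, rank_diagonal, Fintype.card_subtype]

namespace MvPolynomial

variable {σ τ R : Type*} [CommRing R]

def IsSingularPoint (F : MvPolynomial σ R) (w : σ → R) : Prop :=
  eval w F = 0 ∧ ∀ j, eval w (pderiv j F) = 0

noncomputable def hessianAt (F : MvPolynomial σ R) (w : σ → R) : Matrix σ σ R :=
  Matrix.of fun j l => eval w (pderiv j (pderiv l F))

theorem pderiv_rename_of_notMem_range {f : σ → τ} {t : τ} (ht : t ∉ Set.range f)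
    (p : MvPolynomial σ R) : pderiv t (rename f p) = 0 := by
  classical
  refine pderiv_eq_zero_of_notMem_vars fun hmem => ht ?_
  obtain ⟨s, -, rfl⟩ := Finset.mem_image.1 (vars_rename f p hmem)
  exact ⟨s, rfl⟩

theorem hessianAt_rename_inl_add_rename_inr (P : MvPolynomial σ R) (Q : MvPolynomial τ R)
    (w : σ ⊕ τ → R) :
    hessianAt (rename Sum.inl P + rename Sum.inr Q) w =
      fromBlocks (hessianAt P (w ∘ Sum.inl)) 0 0 (hessianAt Q (w ∘ Sum.inr)) := by
  ext (j | j) (l | l) <;>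
    simp [hessianAt, pderiv_rename Sum.inl_injective, pderiv_rename Sum.inr_injective,
      pderiv_rename_of_notMem_range,
      eval_rename]

theorem forall_eval_pderiv_rename_inl_add_rename_inr_eq_zero_iff (P : MvPolynomial σ R)
    (Q : MvPolynomial τ R) (w : σ ⊕ τ → R) :
    (∀ j, eval w (pderiv j (rename Sum.inl P + rename Sum.inr Q)) = 0) ↔
      (∀ i, eval (w ∘ Sum.inl) (pderiv i P) = 0) ∧ ∀ i, eval (w ∘ Sum.inr) (pderiv i Q) = 0 := by
  simp [Sum.forall, pderiv_rename Sum.inl_injective, pderiv_rename Sum.inr_injective,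
    pderiv_rename_of_notMem_range,
    eval_rename]

theorem hessianAt_neg (F : MvPolynomial σ R) (w : σ → R) :
    hessianAt (-F) w = -hessianAt F w := by
  ext; simp [hessianAt]

section Monomial

variable {ι : Type*} [DecidableEq ι]

theorem pderiv_prod_X (s : Finset ι) (i : ι) :
    pderiv i (∏ j ∈ s, X j : MvPolynomial ι R) = if i ∈ s then ∏ j ∈ s.erase i, X j else 0 := by
  have vanish : ∀ t : Finset ι, i ∉ t → pderiv i (∏ j ∈ t, X j : MvPolynomial ι R) = 0 := by
    intro t hi
    induction t using Finset.induction_on with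
    | empty => simp
    | insert a t ha ih =>
      rw [mem_insert, not_or] at hi
      rw [prod_insert ha, Derivation.leibniz, pderiv_X_of_ne (Ne.symm hi.1), ih hi.2]
      simp
  split_ifs with hi
  · rw [← mul_prod_erase s _ hi, Derivation.leibniz, pderiv_X_self, vanish _ (notMem_erase i s)]
    simp
  · exact vanish s hi

variable [Fintype ι]

theorem eval_pderiv_prod_X (a : ι → R) (i : ι) :
    eval a (pderiv i (∏ j, X j)) = ∏ m ∈ {i}ᶜ, a m := by
  simp [pderiv_prod_X, compl_singleton]

theorem hessianAt_prod_X_apply (a : ι → R) (j l : ι) :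
    hessianAt (∏ i, X i) a j l = if j = l then 0 else ∏ m ∈ {j, l}ᶜ, a m := by
  have hcompl : (univ.erase l).erase j = ({j, l}ᶜ : Finset ι) := by
    ext m; simp [and_comm]
  by_cases hjl : j = l <;> simp [hessianAt, pderiv_prod_X, hjl, hcompl]

theorem forall_eval_pderiv_prod_X_eq_zero_iff [IsDomain R] [DecidableEq R] [Nonempty ι]
    (a : ι → R) :
    (∀ i, eval a (pderiv i (∏ j, X j)) = 0) ↔ 1 < #{i | a i = 0} := by
  simp only [eval_pderiv_prod_X, prod_eq_zero_iff, mem_compl, mem_singleton, one_lt_card,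
    mem_filter_univ]
  constructor
  · intro h
    obtain ⟨m, hm, ham⟩ := h (Classical.arbitrary ι)
    obtain ⟨m', hm', ham'⟩ := h m
    exact ⟨m', ham', m, ham, hm'⟩
  · rintro ⟨m, ham, m', ham', hmm'⟩ i
    by_cases him : i = m
    · exact ⟨m', fun h => hmm' (him ▸ h.symm), ham'⟩
    · exact ⟨m, Ne.symm him, ham⟩

theorem hessianAt_prod_X_eq_diagonal_mul_permMatrix {a : ι → R} {p q : ι} (hpq : p ≠ q)
    (ha : ∀ i, a i = 0 ↔ i = p ∨ i = q) :
    hessianAt (∏ i, X i) a =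
      diagonal (fun i => if i = p ∨ i = q then ∏ m ∈ {p, q}ᶜ, a m else 0) *
        (Equiv.swap p q).permMatrix R := by
  ext j l
  have hvanish : ∀ s : Finset ι, (p ∉ s ∨ q ∉ s) → ∏ m ∈ sᶜ, a m = 0 := fun s hs =>
    hs.elim (fun h => prod_eq_zero (mem_compl.2 h) ((ha p).2 (.inl rfl)))
      (fun h => prod_eq_zero (mem_compl.2 h) ((ha q).2 (.inr rfl)))
  rw [hessianAt_prod_X_apply, diagonal_mul]
  simp only [Equiv.Perm.permMatrix, PEquiv.toMatrix_apply, Equiv.toPEquiv_apply, Option.mem_def,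
    Option.some.injEq]
  by_cases hpair : (j = p ∧ l = q) ∨ (j = q ∧ l = p)
  · rcases hpair with ⟨rfl, rfl⟩ | ⟨rfl, rfl⟩
    · simp [hpq]
    · simp [hpq.symm, pair_comm]
  · have hlhs : (if j = l then 0 else ∏ m ∈ {j, l}ᶜ, a m) = 0 := by
      split_ifs with hjl
      · rfl
      · exact hvanish _ (by simp only [mem_insert, mem_singleton]; grind)
    have hrhs : ¬((j = p ∨ j = q) ∧ Equiv.swap p q j = l) := by
      rintro ⟨rfl | rfl, rfl⟩ <;> simp at hpair
    rw [hlhs]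
    split_ifs <;> simp_all

theorem rank_hessianAt_prod_X {K : Type*} [Field K] [DecidableEq K] {a : ι → K}
    (ha : #{i | a i = 0} = 2) : (hessianAt (∏ i, X i) a).rank = 2 := by
  obtain ⟨p, q, hpq, hzeros⟩ := card_eq_two.1 ha
  have ha' : ∀ i, a i = 0 ↔ i = p ∨ i = q := by simpa [Finset.ext_iff] using hzeros
  have hc : ∏ m ∈ {p, q}ᶜ, a m ≠ 0 := prod_ne_zero_iff.2 fun m hm => by
    simpa [ha', not_or] using hm
  rw [hessianAt_prod_X_eq_diagonal_mul_permMatrix hpq ha', rank_diagonal_mul_permMatrix,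
    ← card_pair hpq]
  congr 1
  ext i
  generalize ∏ m ∈ {p, q}ᶜ, a m = c at hc
  simp [hc, or_iff_not_imp_left]

end Monomial

end MvPolynomial

namespace Finset

variable {ι : Type*} [Fintype ι] [DecidableEq ι]

theorem card_eq_two_and_eq_compl_of_disjoint (hι : Fintype.card ι = 4) {s t : Finset ι}
    (hst : Disjoint s t) (hs : 1 < #s) (ht : 1 < #t) : #s = 2 ∧ t = sᶜ := by
  have hsum : #s + #t ≤ 4 := hι ▸ card_union_of_disjoint hst ▸ card_le_univ _
  have hs2 : #s = 2 := by omega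
  refine ⟨hs2, eq_of_subset_of_card_le (subset_compl_iff_disjoint_right.2 hst.symm) ?_⟩
  rw [card_compl, hι, hs2]
  omega

theorem card_eq_two_and_eq_compl_iff {s t : Finset ι} :
    #s = 2 ∧ t = sᶜ ↔
      ∃ p q, p ≠ q ∧ (∀ i, i ∈ s ↔ i = p ∨ i = q) ∧ ∀ i, i ∈ t ↔ ¬(i = p ∨ i = q) := by
  simp only [card_eq_two, Finset.ext_iff, mem_insert, mem_singleton, mem_compl]
  constructor
  · rintro ⟨⟨p, q, hpq, hs⟩, ht⟩
    exact ⟨p, q, hpq, hs, fun i => (ht i).trans (not_congr (hs i))⟩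
  · rintro ⟨p, q, hpq, hs, ht⟩
    exact ⟨⟨p, q, hpq, hs⟩, fun i => (ht i).trans (not_congr (hs i)).symm⟩

end Finset

theorem quadForm_eq_rename (k : Type*) [CommRing k] :
    quadForm k = rename Sum.inl (∏ i, X i) + rename Sum.inr (-∏ i, X i) := by
  simp [quadForm, map_prod, sub_eq_add_neg]

section QuadForm

variable {k : Type*} [Field k] [DecidableEq k]

theorem isSingularPoint_quadForm_iff (w : Fin 4 ⊕ Fin 4 → k) :
    IsSingularPoint (quadForm k) w ↔
      1 < #{i | w (Sum.inl i) = 0} ∧ 1 < #{i | w (Sum.inr i) = 0} := by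
  have hgrad : (∀ j, eval w (pderiv j (quadForm k)) = 0) ↔
      1 < #{i | w (Sum.inl i) = 0} ∧ 1 < #{i | w (Sum.inr i) = 0} := by
    rw [quadForm_eq_rename k, forall_eval_pderiv_rename_inl_add_rename_inr_eq_zero_iff,
      ← forall_eval_pderiv_prod_X_eq_zero_iff, ← forall_eval_pderiv_prod_X_eq_zero_iff]
    simp only [map_neg, neg_eq_zero, Function.comp_def]
  rw [IsSingularPoint, hgrad]
  refine and_iff_right_of_imp fun ⟨hu, hv⟩ => ?_
  obtain ⟨i, hi, -⟩ := one_lt_card.1 hu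
  obtain ⟨i', hi', -⟩ := one_lt_card.1 hv
  simp only [quadForm, map_sub, map_prod, eval_X]
  rw [prod_eq_zero (mem_univ i) (by simpa using hi), prod_eq_zero (mem_univ i') (by simpa using hi'),
    sub_zero]

theorem rank_hessianAt_quadForm {w : Fin 4 ⊕ Fin 4 → k} (hu : #{i | w (Sum.inl i) = 0} = 2)
    (hv : #{i | w (Sum.inr i) = 0} = 2) : (hessianAt (quadForm k) w).rank = 4 := by
  rw [quadForm_eq_rename k, hessianAt_rename_inl_add_rename_inr, rank_fromBlocks_zero_zero,
    hessianAt_neg, rank_neg, rank_hessianAt_prod_X (a := w ∘ Sum.inl) hu,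
    rank_hessianAt_prod_X (a := w ∘ Sum.inr) hv]

theorem isSingularPoint_quadForm_iff_of_isRep {w : Fin 4 ⊕ Fin 4 → k} (hw : IsRep w) :
    IsSingularPoint (quadForm k) w ↔
      #{i | w (Sum.inl i) = 0} = 2 ∧
        ({i | w (Sum.inr i) = 0} : Finset (Fin 4)) =
          ({i | w (Sum.inl i) = 0} : Finset (Fin 4))ᶜ := by
  have hdisj : Disjoint ({i | w (Sum.inl i) = 0} : Finset (Fin 4))
      ({i | w (Sum.inr i) = 0} : Finset (Fin 4)) :=
    disjoint_filter.2 fun i _ hu hv => hw i ⟨hu, hv⟩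
  rw [isSingularPoint_quadForm_iff]
  refine ⟨fun ⟨hu, hv⟩ => card_eq_two_and_eq_compl_of_disjoint (by simp) hdisj hu hv,
    fun ⟨hu, hv⟩ => ⟨by omega, ?_⟩⟩
  rw [hv, card_compl, hu]
  decide

end QuadForm

theorem stmt2_general {k : Type*} [Field k] :
    (∀ w : Fin 4 ⊕ Fin 4 → k, IsRep w →
      ((eval w (quadForm k) = 0 ∧ ∀ j, eval w (pderiv j (quadForm k)) = 0) ↔
        ∃ p q : Fin 4, p ≠ q ∧
          (∀ i, w (Sum.inl i) = 0 ↔ (i = p ∨ i = q)) ∧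
          (∀ i, w (Sum.inr i) = 0 ↔ ¬ (i = p ∨ i = q)))) ∧
    (∀ w : Fin 4 ⊕ Fin 4 → k, IsRep w →
      (eval w (quadForm k) = 0 ∧ ∀ j, eval w (pderiv j (quadForm k)) = 0) →
      (Matrix.of fun j l : Fin 4 ⊕ Fin 4 =>
          eval w (pderiv j (pderiv l (quadForm k)))).rank = 4) := by
  classical
  refine ⟨fun w hw => ?_, fun w hw hsing => ?_⟩
  · have h := (isSingularPoint_quadForm_iff_of_isRep hw).trans card_eq_two_and_eq_compl_iff
    simp only [mem_filter_univ] at h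
    exact h
  · obtain ⟨hu, hv⟩ := (isSingularPoint_quadForm_iff_of_isRep hw).1 hsing
    refine rank_hessianAt_quadForm hu ?_
    rw [hv, card_compl, hu]
    rfl

/-- The hypersurface `X = {u₁u₂u₃u₄ = v₁v₂v₃v₄} ⊂ (ℙ¹)⁴` has exactly 6 singular
points, namely the points `x_{p,q}` indexed by 2-element subsets `{p,q} ⊆ {1,2,3,4}`
where `uᵢ = 0` for `i ∈ {p,q}` and `vᵢ = 0` for `i ∉ {p,q}`; moreover each singular
point is an ordinary double point (the Hessian of the defining form at such a point
has rank 4, i.e. is nondegenerate transversally to the four scaling directions). -/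
theorem stmt2 {k : Type*} [Field k] [IsAlgClosed k] [CharZero k] :
    (∀ w : Fin 4 ⊕ Fin 4 → k, IsRep w →
      ((eval w (quadForm k) = 0 ∧ ∀ j, eval w (pderiv j (quadForm k)) = 0) ↔
        ∃ p q : Fin 4, p ≠ q ∧
          (∀ i, w (Sum.inl i) = 0 ↔ (i = p ∨ i = q)) ∧
          (∀ i, w (Sum.inr i) = 0 ↔ ¬ (i = p ∨ i = q)))) ∧
    (∀ w : Fin 4 ⊕ Fin 4 → k, IsRep w →
      (eval w (quadForm k) = 0 ∧ ∀ j, eval w (pderiv j (quadForm k)) = 0) →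
      (Matrix.of fun j l : Fin 4 ⊕ Fin 4 =>
          eval w (pderiv j (pderiv l (quadForm k)))).rank = 4) :=
  stmt2_general
end

section
/- Let X ⊂ ℙ(V₁) × ℙ(V₂) (dim Vᵢ = 4, over an algebraically closed field of characteristic 0) be a smooth complete intersection of three divisors of bidegree (1,1) with equations spanning A ⊂ V₁* ⊗ V₂*. Then every bilinear form a ∈ A has rank ≥ 3: if some nonzero a ∈ A had rank ≤ 2, then X would be singular. -/
/-!
If `a ∈ A` has rank at most `2`, its left and right kernels `K₁`, `K₂` have dimension at least
`2`, and `a` vanishes on `K₁ × K₂`. Complete `a` to a basis `a, b, c` of `A`. Two bilinear forms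
`b, c` on spaces of dimension at least `2` over an algebraically closed field always have a common
zero `(x, y)` with `x, y ≠ 0`: if `b` is degenerate take `y` in its kernel, otherwise take for `y`
an eigenvector of `b⁻¹ c`, and then `x` in the kernel of the single functional `b (·) y`. Applied
to `K₁ × K₂`, this gives a point `([x], [y])` of `X` at which `a` is singular.
-/

open Module

section

variable {k U₁ U₂ : Type*} [Field k]
  [AddCommGroup U₁] [Module k U₁] [AddCommGroup U₂] [Module k U₂]

namespace LinearMap

lemma exists_ne_zero_apply_eq_zero [FiniteDimensional k U₁] (φ : U₁ →ₗ[k] k)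
    (h₁ : 2 ≤ finrank k U₁) : ∃ x ≠ 0, φ x = 0 := by
  obtain ⟨x, hx, hx0⟩ := Submodule.exists_mem_ne_zero_of_ne_bot
    (ker_ne_bot_of_finrank_lt (f := φ) (by rw [finrank_self]; omega))
  exact ⟨x, hx0, hx⟩

variable [IsAlgClosed k] [FiniteDimensional k U₁] [FiniteDimensional k U₂]

lemma exists_common_isotropic_pair_of_finrank_le (h₁ : 2 ≤ finrank k U₁)
    (h₁₂ : finrank k U₁ ≤ finrank k U₂) (b c : U₁ →ₗ[k] U₂ →ₗ[k] k) :
    ∃ x ≠ 0, ∃ y ≠ 0, b x y = 0 ∧ c x y = 0 := by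
  by_cases hb : ker b.flip = ⊥
  · have hinj : Function.Injective b.flip := ker_eq_bot.mp hb
    have hdim : finrank k U₂ = finrank k (U₁ →ₗ[k] k) := by
      have := finrank_le_finrank_of_injective hinj
      rw [finrank_linearMap_self] at this ⊢
      omega
    have hsurj := (injective_iff_surjective_of_finrank_eq_finrank hdim).mp hinj
    let e := LinearEquiv.ofBijective b.flip ⟨hinj, hsurj⟩
    have : Nontrivial U₂ := Module.nontrivial_of_finrank_pos (R := k) (by omega)
    obtain ⟨μ, hμ⟩ := Module.End.exists_eigenvalue (e.symm.toLinearMap ∘ₗ c.flip)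
    obtain ⟨y, hy⟩ := hμ.exists_hasEigenvector
    have hcy : c.flip y = μ • b.flip y :=
      calc c.flip y = e (e.symm (c.flip y)) := (e.apply_symm_apply _).symm
        _ = e (μ • y) := congrArg e hy.apply_eq_smul
        _ = μ • b.flip y := map_smul e μ y
    obtain ⟨x, hx, hbxy⟩ := (b.flip y).exists_ne_zero_apply_eq_zero h₁
    refine ⟨x, hx, y, hy.2, hbxy, ?_⟩
    simpa [hbxy] using congr($hcy x)
  · obtain ⟨y, hyb, hy⟩ := Submodule.exists_mem_ne_zero_of_ne_bot hb
    obtain ⟨x, hx, hcxy⟩ := (c.flip y).exists_ne_zero_apply_eq_zero h₁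
    exact ⟨x, hx, y, hy, congr($hyb x), hcxy⟩

lemma exists_common_isotropic_pair (h₁ : 2 ≤ finrank k U₁) (h₂ : 2 ≤ finrank k U₂)
    (b c : U₁ →ₗ[k] U₂ →ₗ[k] k) : ∃ x ≠ 0, ∃ y ≠ 0, b x y = 0 ∧ c x y = 0 := by
  rcases le_total (finrank k U₁) (finrank k U₂) with h | h
  · exact exists_common_isotropic_pair_of_finrank_le h₁ h b c
  · obtain ⟨y, hy, x, hx, hb, hc⟩ := exists_common_isotropic_pair_of_finrank_le h₂ h b.flip c.flip
    exact ⟨x, hx, y, hy, hb, hc⟩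

end LinearMap

-- Stated for an `AddCommMonoid` so that it applies directly to submodules of
-- `V₁ →ₗ[k] V₂ →ₗ[k] k`: unifying their monoid instance with that of the group is very slow.
lemma Submodule.exists_le_span_triple {M : Type*} [AddCommMonoid M] [Module k M]
    {S : Submodule k M} (hS : finrank k S = 3) {a : M} (ha : a ∈ S)
    (ha0 : a ≠ 0) : ∃ b c : M, S ≤ span k {a, b, c} := by
  let _ : AddCommGroup M := Module.addCommMonoidToAddCommGroup k
  have : FiniteDimensional k S := Module.finite_of_finrank_eq_succ hS
  obtain ⟨b, hab⟩ := exists_linearIndependent_pair_of_one_lt_finrank (R := k) (M := S) (by omega)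
    (x := (⟨a, ha⟩ : S)) (by simpa using ha0)
  obtain ⟨c, habc⟩ := exists_linearIndependent_cons_of_lt_finrank hab (by omega)
  have htop := habc.span_eq_top_of_card_eq_finrank' (by simp [hS])
  refine ⟨b, c, fun f hf => ?_⟩
  have := mem_map_of_mem (f := S.subtype) (htop ▸ mem_top : (⟨f, hf⟩ : S) ∈ span k _)
  rw [← span_image] at this
  simpa [Set.image_insert_eq, Set.insert_comm] using this

end

theorem stmt12_general {k V₁ V₂ : Type*} [Field k] [IsAlgClosed k]
    [AddCommGroup V₁] [Module k V₁] [AddCommGroup V₂] [Module k V₂]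
    [FiniteDimensional k V₁] [FiniteDimensional k V₂]
    (hV₁ : finrank k V₁ = 4) (hV₂ : finrank k V₂ = 4)
    (A : Submodule k (V₁ →ₗ[k] V₂ →ₗ[k] k)) (hA : finrank k A = 3)
    (hsmooth : ¬ ∃ (v₁ : V₁) (v₂ : V₂) (a : V₁ →ₗ[k] V₂ →ₗ[k] k),
        v₁ ≠ 0 ∧ v₂ ≠ 0 ∧ a ∈ A ∧ a ≠ 0 ∧
        (∀ b ∈ A, b v₁ v₂ = 0) ∧ (∀ w, a v₁ w = 0) ∧ (∀ w, a w v₂ = 0)) :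
    ∀ a ∈ A, a ≠ 0 → 3 ≤ finrank k (LinearMap.range a) := by
  intro a haA ha
  by_contra! hrank
  have h₁ : 2 ≤ finrank k (LinearMap.ker a) := by
    have := a.finrank_range_add_finrank_ker
    omega
  have h₂ : 2 ≤ finrank k (LinearMap.range a).dualCoannihilator := by
    have := Subspace.finrank_add_finrank_dualCoannihilator_eq (LinearMap.range a)
    rw [hV₂] at this
    linarith
  have ha₁ : ∀ x ∈ LinearMap.ker a, ∀ w, a x w = 0 := fun x hx w => by
    rw [LinearMap.mem_ker.mp hx, LinearMap.zero_apply]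
  have ha₂ : ∀ y ∈ (LinearMap.range a).dualCoannihilator, ∀ w, a w y = 0 := fun y hy w =>
    (Submodule.mem_dualCoannihilator y).mp hy _ (LinearMap.mem_range_self a w)
  obtain ⟨b, c, hAbc⟩ := Submodule.exists_le_span_triple hA haA ha
  obtain ⟨⟨x, hx⟩, hx0, ⟨y, hy⟩, hy0, hb, hc⟩ := LinearMap.exists_common_isotropic_pair h₁ h₂
    (b.compl₁₂ (Submodule.subtype _) (Submodule.subtype _))
    (c.compl₁₂ (Submodule.subtype _) (Submodule.subtype _))
  have hvanish : Submodule.span k {a, b, c} ≤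
      LinearMap.ker (LinearMap.applyₗ y ∘ₗ LinearMap.applyₗ x) := by
    rw [Submodule.span_le, Set.insert_subset_iff, Set.insert_subset_iff,
      Set.singleton_subset_iff]
    exact ⟨ha₁ x hx y, hb, hc⟩
  exact hsmooth ⟨x, y, a, by simpa using hx0, by simpa using hy0, haA, ha,
    fun f hf => hvanish (hAbc hf), ha₁ x hx, ha₂ y hy⟩

/-- Let `X ⊂ ℙ(V₁) × ℙ(V₂)` (with `dim Vᵢ = 4`, over an algebraically closed field of
characteristic 0) be a complete intersection of three `(1,1)`-divisors with equations
spanning a 3-dimensional space `A` of bilinear forms.  "Smooth" is taken in the sense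
that there is no point `([v₁],[v₂]) ∈ X` together with a nonzero `a ∈ A` having `v₁`
in its left kernel and `v₂` in its right kernel.  If `X` is smooth in this sense then
every nonzero bilinear form `a ∈ A` has rank `≥ 3`. -/
theorem stmt12 {k V₁ V₂ : Type*} [Field k] [IsAlgClosed k] [CharZero k]
    [AddCommGroup V₁] [Module k V₁] [AddCommGroup V₂] [Module k V₂]
    [FiniteDimensional k V₁] [FiniteDimensional k V₂]
    (hV₁ : finrank k V₁ = 4) (hV₂ : finrank k V₂ = 4)
    (A : Submodule k (V₁ →ₗ[k] V₂ →ₗ[k] k)) (hA : finrank k A = 3)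
    (hsmooth : ¬ ∃ (v₁ : V₁) (v₂ : V₂) (a : V₁ →ₗ[k] V₂ →ₗ[k] k),
        v₁ ≠ 0 ∧ v₂ ≠ 0 ∧ a ∈ A ∧ a ≠ 0 ∧
        (∀ b ∈ A, b v₁ v₂ = 0) ∧ (∀ w, a v₁ w = 0) ∧ (∀ w, a w v₂ = 0)) :
    ∀ a ∈ A, a ≠ 0 → 3 ≤ finrank k (LinearMap.range a) :=
  stmt12_general hV₁ hV₂ A hA hsmooth
end
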